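/- Let ℓ be a prime, n ≥ 1, and q ∈ (Z/ℓ^n)^× with q = 1 in Z/ℓ^n. Then the number of matrices in GL₂(Z/ℓ^n) conjugate to some matrix of the form [[1, w],[0, 1]] with w ∈ Z/ℓ^n equals ℓ^{2n}. -/

import Mathlib

/-!
Over a local ring `R`, conjugating `!![1, w; 0, 1]` by `g` gives `1 + (w / det g) • v v⊥`,
where `v = (a, c)` is the first column of `g` and `v⊥ = (-c, a)`; since `det g` is a unit, `v`
is unimodular, and every unimodular `v` is the first column of some `g`. So we count the
matrices `t • v v⊥` with `v` unimodular. Those whose `(0, 1)` entry is a unit are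
`u • (1, s)(1, s)⊥` with `u` a unit; those whose `(1, 0)` entry is a unit but whose `(0, 1)`
entry is not are `u • (r, 1)(r, 1)⊥` with `r` a non-unit. Over `ℤ/ℓ^(m+1)` the remaining ones
have all entries in the maximal ideal `ℓ ℤ/ℓ^(m+1) ≅ ℤ/ℓ^m`, and are `ℓ` times the matrices of
the same shape over `ℤ/ℓ^m`. So the count `c m` over `ℤ/ℓ^m` satisfies `c 0 = 1` and
`c (m + 1) = (ℓ^(m+1) + ℓ^m) φ(ℓ^(m+1)) + c m = ℓ^(2m) (ℓ^2 - 1) + c m`.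
-/

open Matrix Set

section CommRing

variable {R : Type*} [CommRing R]

theorem isUnit_mul_sq_iff {t a : R} : IsUnit (t * a ^ 2) ↔ IsUnit t ∧ IsUnit a := by
  rw [IsUnit.mul_iff, isUnit_pow_iff two_ne_zero]

/-- The outer product of `(a, c)` with `(-c, a)`. -/
def sqZero (a c : R) : Matrix (Fin 2) (Fin 2) R :=
  !![-(a * c), a ^ 2; -c ^ 2, a * c]

def nilConj (R : Type*) [CommRing R] : Set (Matrix (Fin 2) (Fin 2) R) :=
  {N | ∃ a c t : R, (IsUnit a ∨ IsUnit c) ∧ N = t • sqZero a c}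

theorem sqZero_map {S : Type*} [CommRing S] (f : R →+* S) (a c : R) :
    (sqZero a c).map f = sqZero (f a) (f c) := by
  ext i j; fin_cases i <;> fin_cases j <;> simp [sqZero]

theorem sqZero_mul (u a c : R) : sqZero (u * a) (u * c) = u ^ 2 • sqZero a c := by
  ext i j; fin_cases i <;> fin_cases j <;> simp [sqZero] <;> ring

theorem smul_sqZero_of_mul_eq_one_left {a b : R} (h : a * b = 1) (c t : R) :
    t • sqZero a c = (t * a ^ 2) • sqZero 1 (b * c) := by
  rw [mul_smul, ← sqZero_mul, mul_one, ← mul_assoc, h, one_mul]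

theorem smul_sqZero_of_mul_eq_one_right {b c : R} (h : c * b = 1) (a t : R) :
    t • sqZero a c = (t * c ^ 2) • sqZero (b * a) 1 := by
  rw [mul_smul, ← sqZero_mul, mul_one, ← mul_assoc, h, one_mul]

theorem smul_sqZero_mem_nilConj {a c : R} (h : IsUnit a ∨ IsUnit c) (t : R) :
    t • sqZero a c ∈ nilConj R :=
  ⟨a, c, t, h, rfl⟩

theorem mem_nilConj_iff {N : Matrix (Fin 2) (Fin 2) R} :
    N ∈ nilConj R ↔ ∃ s t : R, N = t • sqZero 1 s ∨ N = t • sqZero s 1 := by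
  constructor
  · rintro ⟨a, c, t, ⟨u, rfl⟩ | ⟨u, rfl⟩, rfl⟩
    · exact ⟨_, _, Or.inl (smul_sqZero_of_mul_eq_one_left u.mul_inv c t)⟩
    · exact ⟨_, _, Or.inr (smul_sqZero_of_mul_eq_one_right u.mul_inv a t)⟩
  · rintro ⟨s, t, rfl | rfl⟩
    · exact smul_sqZero_mem_nilConj (Or.inl isUnit_one) t
    · exact smul_sqZero_mem_nilConj (Or.inr isUnit_one) t

theorem conj_unipotent_eq (g : GL (Fin 2) R) (w : R) :
    (g : Matrix (Fin 2) (Fin 2) R) * !![1, w; 0, 1] *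
        ((g⁻¹ : GL (Fin 2) R) : Matrix (Fin 2) (Fin 2) R) =
      1 + (w * ↑(GeneralLinearGroup.det g)⁻¹) • sqZero (g 0 0) (g 1 0) := by
  have hδ : (↑(GeneralLinearGroup.det g)⁻¹ : R) * (g : Matrix (Fin 2) (Fin 2) R).det = 1 := by
    rw [← GeneralLinearGroup.val_det_apply, Units.inv_mul]
  rw [coe_units_inv, inv_def, ← GeneralLinearGroup.val_det_apply, Ring.inverse_unit]
  generalize (↑(GeneralLinearGroup.det g)⁻¹ : R) = δ at hδ ⊢
  generalize (g : Matrix (Fin 2) (Fin 2) R) = G at hδ ⊢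
  rw [det_fin_two] at hδ
  ext i j
  fin_cases i <;> fin_cases j <;>
    simp [adjugate_fin_two, sqZero, Matrix.mul_apply, Fin.sum_univ_two] <;>
    first | ring1 | linear_combination hδ

theorem exists_GL_col_eq {a c : R} (h : IsUnit a ∨ IsUnit c) :
    ∃ g : GL (Fin 2) R, g 0 0 = a ∧ g 1 0 = c := by
  rcases h with ha | hc
  · exact ⟨nonsingInvUnit !![a, 0; c, 1] (by simpa using ha), rfl, rfl⟩
  · exact ⟨nonsingInvUnit !![a, -1; c, 0] (by simpa using hc), rfl, rfl⟩

theorem isUnit_or_isUnit_col_zero [IsLocalRing R] (g : GL (Fin 2) R) :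
    IsUnit (g 0 0) ∨ IsUnit (g 1 0) := by
  have hdet : IsUnit (g 0 0 * g 1 1 + -(g 0 1 * g 1 0)) := by
    rw [← sub_eq_add_neg, ← det_fin_two, ← GeneralLinearGroup.val_det_apply]
    exact Units.isUnit _
  refine (IsLocalRing.isUnit_or_isUnit_of_isUnit_add hdet).imp
    isUnit_of_mul_isUnit_left fun h => isUnit_of_mul_isUnit_right ((IsUnit.neg_iff _).mp h)

theorem exists_conj_unipotent_iff [IsLocalRing R] (M : Matrix (Fin 2) (Fin 2) R) :
    (∃ (w : R) (g : GL (Fin 2) R),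
        (g : Matrix (Fin 2) (Fin 2) R) * !![1, w; 0, 1] *
          ((g⁻¹ : GL (Fin 2) R) : Matrix (Fin 2) (Fin 2) R) = M) ↔
      M - 1 ∈ nilConj R := by
  constructor
  · rintro ⟨w, g, rfl⟩
    rw [conj_unipotent_eq, add_sub_cancel_left]
    exact smul_sqZero_mem_nilConj (isUnit_or_isUnit_col_zero g) _
  · rintro ⟨a, c, t, hac, hM⟩
    obtain ⟨g, rfl, rfl⟩ := exists_GL_col_eq hac
    refine ⟨t * ↑(GeneralLinearGroup.det g), g, ?_⟩
    rw [conj_unipotent_eq, mul_assoc, Units.mul_inv, mul_one, ← hM, add_sub_cancel]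

theorem nilConj_inter_isUnit_eq_range :
    nilConj R ∩ {N | IsUnit (N 0 1)} = range fun p : R × Rˣ => (p.2 : R) • sqZero 1 p.1 := by
  ext N
  constructor
  · rintro ⟨⟨a, c, t, -, rfl⟩, hN⟩
    obtain ⟨u, hu⟩ : IsUnit (t * a ^ 2) := by simpa [sqZero] using hN
    obtain ⟨v, rfl⟩ := (isUnit_mul_sq_iff.mp (hu ▸ u.isUnit)).2
    refine ⟨(↑v⁻¹ * c, u), ?_⟩
    dsimp only
    rw [hu, ← smul_sqZero_of_mul_eq_one_left v.mul_inv]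
  · rintro ⟨⟨s, u⟩, rfl⟩
    exact ⟨smul_sqZero_mem_nilConj (Or.inl isUnit_one) _, by simp [sqZero]⟩

theorem injective_smul_sqZero_one_left :
    Function.Injective fun p : R × Rˣ => (p.2 : R) • sqZero 1 p.1 := by
  rintro ⟨s, u⟩ ⟨s', u'⟩ h
  have h01 : (u : R) = u' := by simpa [sqZero] using congrFun (congrFun h 0) 1
  have h11 : (u : R) * s = u' * s' := by simpa [sqZero] using congrFun (congrFun h 1) 1
  rw [← h01] at h11
  exact Prod.ext (u.isUnit.mul_left_cancel h11) (Units.ext h01)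

theorem nilConj_sdiff_inter_isUnit_eq_range :
    (nilConj R \ {N | IsUnit (N 0 1)}) ∩ {N | IsUnit (N 1 0)} =
      range fun p : nonunits R × Rˣ => (p.2 : R) • sqZero (p.1 : R) 1 := by
  ext N
  constructor
  · rintro ⟨⟨⟨a, c, t, -, rfl⟩, hN01⟩, hN10⟩
    have hN01 : ¬IsUnit (t * a ^ 2) := by simpa [sqZero] using hN01
    obtain ⟨u, hu⟩ : IsUnit (t * c ^ 2) := by simpa [sqZero] using hN10
    obtain ⟨ht, v, rfl⟩ := isUnit_mul_sq_iff.mp (hu ▸ u.isUnit)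
    have hb : ↑v⁻¹ * a ∈ nonunits R := fun hb =>
      hN01 (isUnit_mul_sq_iff.mpr ⟨ht, by simpa using v.isUnit.mul hb⟩)
    refine ⟨(⟨_, hb⟩, u), ?_⟩
    dsimp only
    rw [hu, ← smul_sqZero_of_mul_eq_one_right v.mul_inv]
  · rintro ⟨⟨⟨r, hr⟩, u⟩, rfl⟩
    refine ⟨⟨smul_sqZero_mem_nilConj (Or.inr isUnit_one) _, fun h => hr ?_⟩, by simp [sqZero]⟩
    simpa [sqZero] using h

theorem injective_smul_sqZero_one_right :
    Function.Injective fun p : nonunits R × Rˣ => (p.2 : R) • sqZero (p.1 : R) 1 := by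
  rintro ⟨r, u⟩ ⟨r', u'⟩ h
  have h10 : (u : R) = u' := by simpa [sqZero] using congrFun (congrFun h 1) 0
  have h11 : (u : R) * r = u' * r' := by simpa [sqZero] using congrFun (congrFun h 1) 1
  rw [← h10] at h11
  exact Prod.ext (Subtype.ext (u.isUnit.mul_left_cancel h11)) (Units.ext h10)

theorem ncard_nilConj [Finite R] :
    (nilConj R).ncard = Nat.card R * Nat.card Rˣ + Nat.card (nonunits R) * Nat.card Rˣ +
      {N ∈ nilConj R | ¬IsUnit (N 0 1) ∧ ¬IsUnit (N 1 0)}.ncard := by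
  have hC : (nilConj R \ {N | IsUnit (N 0 1)}) \ {N | IsUnit (N 1 0)} =
      {N ∈ nilConj R | ¬IsUnit (N 0 1) ∧ ¬IsUnit (N 1 0)} := by
    ext N; simp only [mem_sdiff, mem_ofPred_eq]; tauto
  rw [← ncard_inter_add_ncard_sdiff_eq_ncard (nilConj R) {N | IsUnit (N 0 1)},
    ← ncard_inter_add_ncard_sdiff_eq_ncard (nilConj R \ _) {N | IsUnit (N 1 0)}, hC,
    nilConj_inter_isUnit_eq_range, nilConj_sdiff_inter_isUnit_eq_range, ← Nat.card_coe_set_eq,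
    ← Nat.card_coe_set_eq, Nat.card_range_of_injective injective_smul_sqZero_one_left,
    Nat.card_range_of_injective injective_smul_sqZero_one_right, Nat.card_prod, Nat.card_prod,
    add_assoc]

end CommRing

namespace ZMod

def redPow (ℓ m : ℕ) : ZMod (ℓ ^ (m + 1)) →+* ZMod (ℓ ^ m) :=
  castHom (pow_dvd_pow ℓ m.le_succ) _

/-- Multiplication by `ℓ`, which is well defined modulo `ℓ ^ m`. -/
def mulEll (ℓ m : ℕ) (x : ZMod (ℓ ^ m)) : ZMod (ℓ ^ (m + 1)) :=
  ℓ * (x.val : ZMod (ℓ ^ (m + 1)))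

variable {ℓ : ℕ}

section

variable {m : ℕ}

theorem mulEll_natCast (k : ℕ) : mulEll ℓ m k = ℓ * k := by
  rw [mulEll, val_natCast, ← Nat.cast_mul, ← Nat.cast_mul, natCast_eq_natCast_iff, pow_succ']
  exact (Nat.mod_modEq k _).mul_left' ℓ

variable [NeZero ℓ]

theorem mulEll_mul_redPow (x : ZMod (ℓ ^ m)) (y : ZMod (ℓ ^ (m + 1))) :
    mulEll ℓ m (x * redPow ℓ m y) = y * mulEll ℓ m x := by
  rw [← natCast_zmod_val x, ← natCast_zmod_val y, redPow, map_natCast, ← Nat.cast_mul,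
    mulEll_natCast, mulEll_natCast]
  push_cast
  ring

theorem mulEll_injective : Function.Injective (mulEll ℓ m) := by
  intro a b h
  rw [← natCast_zmod_val a, ← natCast_zmod_val b, mulEll_natCast, mulEll_natCast,
    ← Nat.cast_mul, ← Nat.cast_mul, natCast_eq_natCast_iff, pow_succ'] at h
  rw [← natCast_zmod_val a, ← natCast_zmod_val b, natCast_eq_natCast_iff]
  exact Nat.ModEq.mul_left_cancel' (NeZero.ne ℓ) h

theorem map_mulEll_smul_map (x : ZMod (ℓ ^ m))
    (M : Matrix (Fin 2) (Fin 2) (ZMod (ℓ ^ (m + 1)))) :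
    (x • M.map (redPow ℓ m)).map (mulEll ℓ m) = mulEll ℓ m x • M := by
  ext i j
  simp [mulEll_mul_redPow, mul_comm]

theorem map_mulEll_mem_nilConj {N : Matrix (Fin 2) (Fin 2) (ZMod (ℓ ^ m))}
    (hN : N ∈ nilConj (ZMod (ℓ ^ m))) : N.map (mulEll ℓ m) ∈ nilConj (ZMod (ℓ ^ (m + 1))) := by
  obtain ⟨s, t, rfl | rfl⟩ := mem_nilConj_iff.mp hN <;>
    obtain ⟨s, rfl⟩ := ringHom_surjective (redPow ℓ m) s
  · rw [← map_one (redPow ℓ m), ← sqZero_map, map_mulEll_smul_map]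
    exact smul_sqZero_mem_nilConj (Or.inl isUnit_one) _
  · rw [← map_one (redPow ℓ m), ← sqZero_map, map_mulEll_smul_map]
    exact smul_sqZero_mem_nilConj (Or.inr isUnit_one) _

end

theorem range_mulEll (hℓ : ℓ.Prime) (m : ℕ) :
    range (mulEll ℓ m) = nonunits (ZMod (ℓ ^ (m + 1))) := by
  have : NeZero ℓ := ⟨hℓ.ne_zero⟩
  ext y
  constructor
  · rintro ⟨x, rfl⟩ hx
    exact prime_natCast_not_isUnit_pow hℓ m.succ_pos (isUnit_of_mul_isUnit_left hx)
  · intro hy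
    rw [mem_nonunits_iff, ← natCast_zmod_val y, isUnit_natCast_iff_not_dvd_pow hℓ m.succ_pos,
      not_not] at hy
    obtain ⟨k, hk⟩ := hy
    exact ⟨k, by rw [mulEll_natCast, ← natCast_zmod_val y, hk, Nat.cast_mul]⟩

theorem nilConj_nonunits_eq_image (hℓ : ℓ.Prime) (m : ℕ) :
    {N ∈ nilConj (ZMod (ℓ ^ (m + 1))) | ¬IsUnit (N 0 1) ∧ ¬IsUnit (N 1 0)} =
      (fun N => N.map (mulEll ℓ m)) '' nilConj (ZMod (ℓ ^ m)) := by
  have : NeZero ℓ := ⟨hℓ.ne_zero⟩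
  ext N
  constructor
  · rintro ⟨⟨a, c, t, hac, rfl⟩, h01, h10⟩
    have ht : t ∈ nonunits _ := fun ht => by
      rcases hac with ha | hc
      · exact h01 (by simpa [sqZero] using isUnit_mul_sq_iff.mpr ⟨ht, ha⟩)
      · exact h10 (by simpa [sqZero] using isUnit_mul_sq_iff.mpr ⟨ht, hc⟩)
    obtain ⟨x, rfl⟩ := (range_mulEll hℓ m).symm ▸ ht
    refine ⟨x • sqZero (redPow ℓ m a) (redPow ℓ m c),
      smul_sqZero_mem_nilConj (hac.imp (IsUnit.map _) (IsUnit.map _)) x, ?_⟩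
    dsimp only
    rw [← sqZero_map, map_mulEll_smul_map]
  · rintro ⟨N, hN, rfl⟩
    have hent : ∀ i j, (N.map (mulEll ℓ m)) i j ∈ nonunits _ := fun i j =>
      range_mulEll hℓ m ▸ mem_range_self (N i j)
    exact ⟨map_mulEll_mem_nilConj hN, hent 0 1, hent 1 0⟩

theorem ncard_nilConj_prime_pow (hℓ : ℓ.Prime) :
    ∀ m : ℕ, (nilConj (ZMod (ℓ ^ m))).ncard = ℓ ^ (2 * m)
  | 0 => by
    have : Subsingleton (Matrix (Fin 2) (Fin 2) (ZMod (ℓ ^ 0))) := by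
      rw [pow_zero]; infer_instance
    exact ncard_eq_one.mpr ⟨_, subsingleton_of_subsingleton.eq_singleton_of_mem
      (smul_sqZero_mem_nilConj (Or.inl isUnit_one) (0 : ZMod (ℓ ^ 0)) (c := 0))⟩
  | m + 1 => by
    have : NeZero ℓ := ⟨hℓ.ne_zero⟩
    have hnonunits : Nat.card (nonunits (ZMod (ℓ ^ (m + 1)))) = ℓ ^ m := by
      rw [← range_mulEll hℓ m, Nat.card_range_of_injective mulEll_injective, Nat.card_zmod]
    rw [ncard_nilConj, nilConj_nonunits_eq_image hℓ,
      ncard_image_of_injective _ (map_injective mulEll_injective), ncard_nilConj_prime_pow hℓ m,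
      hnonunits, Nat.card_zmod, Nat.card_eq_fintype_card, card_units_eq_totient,
      Nat.totient_prime_pow_succ hℓ]
    obtain ⟨k, rfl⟩ : ∃ k, ℓ = k + 1 := ⟨ℓ - 1, (Nat.sub_add_cancel hℓ.one_le).symm⟩
    rw [Nat.add_sub_cancel]
    ring

theorem isLocalRing_prime_pow {n : ℕ} (hℓ : ℓ.Prime) (hn : n ≠ 0) :
    IsLocalRing (ZMod (ℓ ^ n)) := by
  have : Fact ℓ.Prime := ⟨hℓ⟩
  have : Nontrivial (ZMod (ℓ ^ n)) :=
    nontrivial_iff.mpr (Nat.pow_eq_one.not.mpr (by have := hℓ.one_lt; omega))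
  exact .of_surjective' (PadicInt.toZModPow n) (ringHom_surjective _)

end ZMod

/-- The number of matrices in `GL₂(Z/ℓ^n)` conjugate to some `[[1, w],[0, 1]]`. -/
theorem stmt11 (ℓ : ℕ) (hℓ : ℓ.Prime) (n : ℕ) (hn : 1 ≤ n) :
    Nat.card {M : Matrix (Fin 2) (Fin 2) (ZMod (ℓ ^ n)) //
        ∃ (w : ZMod (ℓ ^ n)) (g : GL (Fin 2) (ZMod (ℓ ^ n))),
          (g : Matrix (Fin 2) (Fin 2) (ZMod (ℓ ^ n))) *
              (!![1, w; 0, (1 : ZMod (ℓ ^ n))]) *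
              ((g⁻¹ : GL (Fin 2) (ZMod (ℓ ^ n))) : Matrix (Fin 2) (Fin 2) (ZMod (ℓ ^ n))) =
            M} =
      ℓ ^ (2 * n) := by
  have := ZMod.isLocalRing_prime_pow hℓ (Nat.one_le_iff_ne_zero.mp hn)
  rw [Nat.card_congr (Equiv.subtypeEquiv (Equiv.subRight 1) exists_conj_unipotent_iff),
    Nat.card_coe_set_eq, ZMod.ncard_nilConj_prime_pow hℓ]
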